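/- arXiv:1901.03700 — 2 statements merged into one kernel-verified Lean document; each statement's English description precedes it below -/
import Mathlib

section
/- For fixed m ∈ ℕ and every r ∈ ℕ, ζ(2r) = (-1)^{r-1} 2^{2r-1} π^{2r} B_{2r}^{[m-1]} / (m!(2r)!) + Δ_r^{[m-1]}, where Δ_r^{[m-1]} = ((-1)^{r-1} 2^{2r-1} π^{2r}/m!)[ (B_{2r}^{[m-1]}(1) - B_{2r}^{[m-1]})/(2(2r)!) - (B_{2r+1}^{[m-1]}(1) - B_{2r+1}^{[m-1]})/((2r+1)!) - ∑_{j=1}^{r-1} ((B_{2r-2j+1}^{[m-1]}(1) - B_{2r-2j+1}^{[m-1]})/((2r-2j+1)!)) · B_{2j}/(2j)! ], with B_{2j} the classical Bernoulli numbers. -/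
open scoped Nat Real

/-- The partial sum `∑_{l=0}^{m-1} z^l / l!` of the exponential series. -/
noncomputable def expPartialSum (m : ℕ) : PowerSeries ℝ :=
  ∑ l ∈ Finset.range m, PowerSeries.C ((1 : ℝ) / l !) * PowerSeries.X ^ l

/-- `B : ℕ → ℝ → ℝ` is the family of generalized Bernoulli polynomials of level `m`,
i.e. `z^m e^{xz} / (e^z - ∑_{l=0}^{m-1} z^l/l!) = ∑ B n x * z^n / n!`, stated
multiplicatively. -/
noncomputable def IsGenBernoulli (m : ℕ) (B : ℕ → ℝ → ℝ) : Prop :=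
  ∀ x : ℝ,
    (PowerSeries.exp ℝ - expPartialSum m) * PowerSeries.mk (fun n => B n x / n !) =
      PowerSeries.X ^ m * PowerSeries.mk (fun n => x ^ n / n !)

/-!
With `b(z) = ∑ Bₙ(0) zⁿ/n!`, the defining identity says
`b(z) · (e^z - ∑_{l<m} z^l/l!)/z^m = 1` and `∑ Bₙ(x) zⁿ/n! = b(z) e^{xz}`. Hence
`∑ (Bₙ(1) - Bₙ(0)) zⁿ/n! = b(z) (e^z - 1)`, and multiplying by `z/(e^z - 1)` expresses
`z b(z)` as the convolution of these differences with the Bernoulli numbers. In the coefficient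
of `z^{2r+1}` the odd Bernoulli numbers beyond `B₁` vanish and the term `B₁(1) - B₁(0) = m!`
carries `B_{2r}`; Euler's formula `ζ(2r) = (-1)^{r+1} 2^{2r-1} π^{2r} B_{2r}/(2r)!` finishes
the proof.
-/

open PowerSeries Finset

noncomputable def egf (a : ℕ → ℝ) : PowerSeries ℝ :=
  mk fun n => a n / n !

noncomputable def expTail (m : ℕ) : PowerSeries ℝ :=
  mk fun n => 1 / (n + m)!

lemma coeff_expPartialSum (m k : ℕ) :
    coeff k (expPartialSum m) = if k < m then 1 / (k ! : ℝ) else 0 := by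
  simp [expPartialSum, map_sum]

lemma exp_sub_expPartialSum (m : ℕ) : exp ℝ - expPartialSum m = X ^ m * expTail m := by
  ext k
  rw [map_sub, coeff_exp, coeff_expPartialSum, coeff_X_pow_mul', expTail, coeff_mk]
  by_cases hk : k < m
  · simp [hk, not_le.mpr hk]
  · simp [hk, le_of_not_gt hk, Nat.sub_add_cancel (le_of_not_gt hk)]

lemma egf_pow_zero : egf (fun n => (0 : ℝ) ^ n) = 1 := by
  ext n
  cases n <;> simp [egf, coeff_one]

lemma egf_pow_one : egf (fun n => (1 : ℝ) ^ n) = exp ℝ := by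
  ext n
  simp [egf, coeff_exp]

lemma constantCoeff_expTail (m : ℕ) : constantCoeff (expTail m) = 1 / (m ! : ℝ) := by
  simp [expTail]

lemma sum_range_mul_bernoulli_div_factorial {K : Type*} [Field K] [CharZero K] (g : ℕ → K)
    (r : ℕ) :
    ∑ k ∈ range (2 * r + 2), g k * ((bernoulli k : K) / k !) =
      g 0 - g 1 / 2 + ∑ j ∈ Icc 1 r, g (2 * j) * ((bernoulli (2 * j) : K) / (2 * j)!) := by
  induction r with
  | zero => simp [sum_range_succ, bernoulli_one]; ring
  | succ r ih =>
    have hodd : bernoulli (2 * r + 3) = 0 :=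
      bernoulli_eq_zero_of_odd ⟨r + 1, by ring⟩ (by omega)
    rw [show 2 * (r + 1) + 2 = 2 * r + 2 + 1 + 1 by ring, sum_range_succ, sum_range_succ, ih,
      sum_Icc_succ_top (by omega), hodd]
    simp only [Rat.cast_zero, zero_div, mul_zero, add_zero]
    ring_nf

namespace IsGenBernoulli

variable {m : ℕ} {B : ℕ → ℝ → ℝ}

lemma expTail_mul_egf (hB : IsGenBernoulli m B) (x : ℝ) :
    expTail m * egf (B · x) = egf (x ^ ·) := by
  have h := hB x
  rw [exp_sub_expPartialSum, mul_assoc] at h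
  exact X_pow_mul_cancel h

lemma apply_zero_zero (hB : IsGenBernoulli m B) : B 0 0 = m ! := by
  have h := congrArg constantCoeff (hB.expTail_mul_egf 0)
  rw [egf_pow_zero, map_mul, constantCoeff_expTail, map_one] at h
  simp only [egf, constantCoeff_mk, Nat.factorial_zero, Nat.cast_one, div_one] at h
  field_simp at h
  exact h

lemma egf_eq_egf_zero_mul (hB : IsGenBernoulli m B) (x : ℝ) :
    egf (B · x) = egf (B · 0) * egf (x ^ ·) := by
  rw [← hB.expTail_mul_egf x, ← mul_assoc, mul_comm (egf _), hB.expTail_mul_egf 0, egf_pow_zero,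
    one_mul]

lemma sub_apply_one (hB : IsGenBernoulli m B) : B 1 1 - B 1 0 = m ! := by
  have h := congrArg (coeff 1) (hB.egf_eq_egf_zero_mul 1)
  rw [egf_pow_one, coeff_mul, Nat.sum_antidiagonal_eq_sum_range_succ_mk] at h
  simp [sum_range_succ, egf, coeff_exp] at h
  rw [h, hB.apply_zero_zero]
  ring

lemma egf_sub_mul_bernoulliPowerSeries (hB : IsGenBernoulli m B) :
    (egf (B · 1) - egf (B · 0)) * bernoulliPowerSeries ℝ = egf (B · 0) * X := by
  rw [hB.egf_eq_egf_zero_mul 1, egf_pow_one, ← bernoulliPowerSeries_mul_exp_sub_one]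
  ring

lemma sum_range_mul_bernoulli (hB : IsGenBernoulli m B) (n : ℕ) :
    ∑ k ∈ range (n + 2), (B (n + 1 - k) 1 - B (n + 1 - k) 0) / (n + 1 - k)! *
      ((bernoulli k : ℝ) / k !) = B n 0 / n ! := by
  have h := congrArg (coeff (n + 1)) hB.egf_sub_mul_bernoulliPowerSeries
  rw [mul_comm, coeff_mul, Nat.sum_antidiagonal_eq_sum_range_succ_mk, coeff_succ_mul_X] at h
  simp only [egf, bernoulliPowerSeries, map_sub, coeff_mk, map_div₀, eq_ratCast,
    Rat.cast_natCast] at h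
  rw [← h]
  refine sum_congr rfl fun k _ => ?_
  rw [mul_comm, sub_div]

lemma sum_range_mul_bernoulli_two_mul (hB : IsGenBernoulli m B) {r : ℕ} (hr : 1 ≤ r) :
    (B (2 * r + 1) 1 - B (2 * r + 1) 0) / (2 * r + 1)! -
      (B (2 * r) 1 - B (2 * r) 0) / (2 * r)! / 2 +
      ∑ j ∈ Icc 1 (r - 1), (B (2 * r - 2 * j + 1) 1 - B (2 * r - 2 * j + 1) 0) /
        (2 * r - 2 * j + 1)! * ((bernoulli (2 * j) : ℝ) / (2 * j)!) +
      m ! * ((bernoulli (2 * r) : ℝ) / (2 * r)!) = B (2 * r) 0 / (2 * r)! := by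
  rw [← hB.sum_range_mul_bernoulli (2 * r),
    sum_range_mul_bernoulli_div_factorial (fun k => (B (2 * r + 1 - k) 1 - B (2 * r + 1 - k) 0) /
      ((2 * r + 1 - k)! : ℝ)),
    ← Nat.sub_add_cancel hr, sum_Icc_succ_top (by omega), Nat.sub_add_cancel hr]
  simp only [Nat.sub_zero, show 2 * r + 1 - 1 = 2 * r by omega,
    show 2 * r + 1 - 2 * r = 1 by omega, hB.sub_apply_one, Nat.factorial_one, Nat.cast_one,
    div_one]
  rw [add_assoc]
  congr 2
  refine sum_congr rfl fun j hj => ?_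
  rw [show 2 * r + 1 - 2 * j = 2 * r - 2 * j + 1 by have := (mem_Icc.mp hj).2; omega]

end IsGenBernoulli

theorem stmt_13_general (m : ℕ) (B : ℕ → ℝ → ℝ) (hB : IsGenBernoulli m B)
    (r : ℕ) (hr : 1 ≤ r) :
    riemannZeta (2 * r) =
      ((((-1 : ℝ) ^ (r - 1) * 2 ^ (2 * r - 1) * π ^ (2 * r) * B (2 * r) 0 /
          ((m ! : ℝ) * ((2 * r)! : ℝ))) +
        ((-1 : ℝ) ^ (r - 1) * 2 ^ (2 * r - 1) * π ^ (2 * r) / (m ! : ℝ)) *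
          ((B (2 * r) 1 - B (2 * r) 0) / (2 * ((2 * r)! : ℝ)) -
            (B (2 * r + 1) 1 - B (2 * r + 1) 0) / (((2 * r + 1)! : ℝ)) -
            ∑ j ∈ Finset.Icc 1 (r - 1),
              ((B (2 * r - 2 * j + 1) 1 - B (2 * r - 2 * j + 1) 0) /
                  ((2 * r - 2 * j + 1)! : ℝ)) *
                ((bernoulli (2 * j) : ℚ) : ℝ) / ((2 * j)! : ℝ)) : ℝ) : ℂ) := by
  have hsign : (-1 : ℂ) ^ (r + 1) = (-1) ^ (r - 1) := by
    rw [show r + 1 = r - 1 + 2 by omega, pow_add]; norm_num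
  have hm : (m ! : ℂ) ≠ 0 := Nat.cast_ne_zero.mpr m.factorial_ne_zero
  rw [riemannZeta_two_mul_nat (by omega), hsign, mul_div_mul_comm,
    ← hB.sum_range_mul_bernoulli_two_mul hr]
  push_cast
  field_simp
  ring

theorem stmt_13 (m : ℕ) (hm : 0 < m) (B : ℕ → ℝ → ℝ) (hB : IsGenBernoulli m B)
    (r : ℕ) (hr : 1 ≤ r) :
    riemannZeta (2 * r) =
      ((((-1 : ℝ) ^ (r - 1) * 2 ^ (2 * r - 1) * π ^ (2 * r) * B (2 * r) 0 /
          ((m ! : ℝ) * ((2 * r)! : ℝ))) +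
        ((-1 : ℝ) ^ (r - 1) * 2 ^ (2 * r - 1) * π ^ (2 * r) / (m ! : ℝ)) *
          ((B (2 * r) 1 - B (2 * r) 0) / (2 * ((2 * r)! : ℝ)) -
            (B (2 * r + 1) 1 - B (2 * r + 1) 0) / (((2 * r + 1)! : ℝ)) -
            ∑ j ∈ Finset.Icc 1 (r - 1),
              ((B (2 * r - 2 * j + 1) 1 - B (2 * r - 2 * j + 1) 0) /
                  ((2 * r - 2 * j + 1)! : ℝ)) *
                ((bernoulli (2 * j) : ℚ) : ℝ) / ((2 * j)! : ℝ)) : ℝ) : ℂ) :=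
  stmt_13_general m B hB r hr
end

section
/- Product integral formula: for r, n ≥ 1, ∫_0^1 B_r^{[m-1]}(t) B_n^{[m-1]}(t) dt = ((-1)^{r+1} r! n! m!/(r+n)!)[(B_{r+n+1}^{[m-1]} - B_{r+n+1}^{[m-1]}(1))/(r+n+1) + (1/m!) ∑_{k=1}^r A_k^{[m-1]}], where A_k^{[m-1]} = ((-1)^k/k)·C(r+n, k-1)·(B_{r+n-k+1}^{[m-1]} B_k^{[m-1]} - B_{r+n-k+1}^{[m-1]}(1) B_k^{[m-1]}(1)). -/
open scoped Nat Real

/-! Put `P n := B n / n!`. Dividing the generating-function identity at `x` by the one at `0`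
shows `P n x = ∑_{i+j=n} P i 0 · x^j / j!`, so `P (n+1)' = P n`, and `P 0 = m!` is constant.
Integrating by parts `r` times moves all derivatives off `P r`: the `i`-th step contributes the
boundary term `[P i · P (r+n-i+1)]₀¹`, and what is left is `∫ P 0 · P (r+n) = m! [P (r+n+1)]₀¹`. -/

open Finset PowerSeries

section DerivativeChain

variable {P : ℕ → ℝ → ℝ} (hP : ∀ n x, HasDerivAt (P (n + 1)) (P n x) x)

include hP in
lemma continuous_of_hasDerivAt_chain (hP0 : Continuous (P 0)) : ∀ n, Continuous (P n)
  | 0 => hP0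
  | n + 1 => continuous_iff_continuousAt.2 fun x => (hP n x).continuousAt

variable (hP0 : Continuous (P 0)) (a b : ℝ)

include hP hP0 in
lemma integral_succ_mul_eq_of_hasDerivAt_chain (k s : ℕ) :
    ∫ t in a..b, P (k + 1) t * P s t =
      P (k + 1) b * P (s + 1) b - P (k + 1) a * P (s + 1) a -
        ∫ t in a..b, P k t * P (s + 1) t :=
  intervalIntegral.integral_mul_deriv_eq_deriv_mul (fun x _ => hP k x) (fun x _ => hP s x)
    ((continuous_of_hasDerivAt_chain hP hP0 k).intervalIntegrable a b)
    ((continuous_of_hasDerivAt_chain hP hP0 s).intervalIntegrable a b)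

include hP hP0 in
lemma integral_mul_eq_of_hasDerivAt_chain (k s : ℕ) :
    ∫ t in a..b, P k t * P s t =
      (-1) ^ k * (∫ t in a..b, P 0 t * P (k + s) t) +
        ∑ i ∈ Icc 1 k, (-1) ^ (k - i) *
          (P i b * P (k + s - i + 1) b - P i a * P (k + s - i + 1) a) := by
  induction k generalizing s with
  | zero => simp
  | succ k ih =>
    have hsum : ∑ i ∈ Icc 1 k, (-1 : ℝ) ^ (k + 1 - i) *
          (P i b * P (k + 1 + s - i + 1) b - P i a * P (k + 1 + s - i + 1) a) =
        -∑ i ∈ Icc 1 k, (-1) ^ (k - i) *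
          (P i b * P (k + (s + 1) - i + 1) b - P i a * P (k + (s + 1) - i + 1) a) := by
      rw [← sum_neg_distrib]
      refine sum_congr rfl fun i hi => ?_
      rw [Nat.sub_add_comm (mem_Icc.1 hi).2, pow_succ, show k + 1 + s = k + (s + 1) by ring]
      ring
    rw [integral_succ_mul_eq_of_hasDerivAt_chain hP hP0, ih, sum_Icc_succ_top (by omega), hsum,
      Nat.sub_self, Nat.add_sub_cancel_left, show k + (s + 1) = k + 1 + s by ring]
    ring

include hP in
lemma integral_zero_mul_eq_of_hasDerivAt_chain {c : ℝ} (hc : ∀ x, P 0 x = c) (N : ℕ) :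
    ∫ t in a..b, P 0 t * P N t = c * (P (N + 1) b - P (N + 1) a) := by
  have hcont := continuous_of_hasDerivAt_chain hP (continuous_const.congr fun x => (hc x).symm) N
  simp_rw [hc, intervalIntegral.integral_const_mul,
    intervalIntegral.integral_eq_sub_of_hasDerivAt (fun x _ => hP N x) (hcont.intervalIntegrable a b)]

end DerivativeChain

lemma hasDerivAt_pow_succ_div_factorial (n : ℕ) (x : ℝ) :
    HasDerivAt (fun t => t ^ (n + 1) / (n + 1)! : ℝ → ℝ) (x ^ n / n !) x := by
  refine ((hasDerivAt_pow (n + 1) x).div_const ((n + 1)! : ℝ)).congr_deriv ?_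
  rw [Nat.factorial_succ, Nat.cast_mul, Nat.add_sub_cancel]
  field_simp

lemma hasDerivAt_of_eq_sum_antidiagonal {P : ℕ → ℝ → ℝ} (c : ℕ → ℝ)
    (hP : ∀ n x, P n x = ∑ p ∈ antidiagonal n, c p.1 * (x ^ p.2 / p.2 !)) (n : ℕ) (x : ℝ) :
    HasDerivAt (P (n + 1)) (P n x) x := by
  simp_rw [funext (hP (n + 1)), Nat.sum_antidiagonal_succ', hP n]
  simp only [pow_zero, Nat.factorial_zero, Nat.cast_one, div_one, mul_one]
  exact (HasDerivAt.fun_sum fun p _ =>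
    (hasDerivAt_pow_succ_div_factorial p.2 x).const_mul (c p.1)).const_add _

lemma coeff_exp_sub_expPartialSum (m i : ℕ) :
    coeff i (exp ℝ - expPartialSum m) = if i < m then 0 else (1 : ℝ) / i ! := by
  simp only [expPartialSum, map_sub, map_sum, coeff_exp, coeff_C_mul, coeff_X_pow, mul_ite,
    mul_one, mul_zero, sum_ite_eq, mem_range]
  split_ifs <;> simp

lemma exp_sub_expPartialSum_ne_zero (m : ℕ) : exp ℝ - expPartialSum m ≠ 0 := fun h => by
  simpa [h, eq_comm, Nat.factorial_ne_zero] using coeff_exp_sub_expPartialSum m m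

lemma mk_zero_pow_div_factorial : mk (fun n => (0 : ℝ) ^ n / n !) = 1 := by
  ext (_ | _) <;> simp

namespace IsGenBernoulli

variable {m : ℕ} {B : ℕ → ℝ → ℝ} (hB : IsGenBernoulli m B)
include hB

lemma mk_eq_mul (x : ℝ) :
    mk (fun n => B n x / n !) = mk (fun n => B n 0 / n !) * mk (fun n => x ^ n / n !) :=
  mul_left_cancel₀ (exp_sub_expPartialSum_ne_zero m) <| by
    rw [hB x, ← mul_assoc, hB 0, mk_zero_pow_div_factorial, mul_one]

lemma div_factorial_eq_sum (n : ℕ) (x : ℝ) :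
    B n x / n ! = ∑ p ∈ antidiagonal n, B p.1 0 / p.1 ! * (x ^ p.2 / p.2 !) := by
  simpa [coeff_mul] using congrArg (coeff n) (hB.mk_eq_mul x)

lemma hasDerivAt_div_factorial (n : ℕ) (x : ℝ) :
    HasDerivAt (fun t => B (n + 1) t / (n + 1)!) (B n x / n !) x :=
  hasDerivAt_of_eq_sum_antidiagonal (fun j => B j 0 / j !) hB.div_factorial_eq_sum n x

lemma zero_zero_eq_factorial : B 0 0 = m ! := by
  have h := congrArg (coeff m) (hB 0)
  rw [mk_zero_pow_div_factorial, mul_one, coeff_X_pow_self, coeff_mul,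
    sum_eq_single (m, 0)] at h
  · simp only [coeff_exp_sub_expPartialSum, lt_irrefl, if_false, coeff_mk] at h
    exact ((inv_mul_eq_one₀ (by positivity)).1 (by simpa using h)).symm
  · rintro ⟨i, j⟩ hij hne
    have hi : i < m := by
      rw [HasAntidiagonal.mem_antidiagonal] at hij
      by_contra!
      exact hne (by simp only [Prod.mk.injEq]; omega)
    simp [coeff_exp_sub_expPartialSum, hi]
  · simp

lemma zero_eq_factorial (x : ℝ) : B 0 x = m ! := by
  simpa [hB.zero_zero_eq_factorial] using hB.div_factorial_eq_sum 0 x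

lemma integral_div_factorial_mul_div_factorial (a b : ℝ) (r n : ℕ) :
    ∫ t in a..b, B r t / r ! * (B n t / n !) =
      (-1) ^ r * (m ! * (B (r + n + 1) b / (r + n + 1)! - B (r + n + 1) a / (r + n + 1)!)) +
        ∑ i ∈ Icc 1 r, (-1) ^ (r - i) *
          (B i b / i ! * (B (r + n - i + 1) b / (r + n - i + 1)!) -
            B i a / i ! * (B (r + n - i + 1) a / (r + n - i + 1)!)) := by
  have hP0 : ∀ x, B 0 x / (0 ! : ℝ) = m ! := fun x => by simp [hB.zero_eq_factorial]
  rw [integral_mul_eq_of_hasDerivAt_chain (P := fun k t => B k t / (k ! : ℝ))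
      hB.hasDerivAt_div_factorial (continuous_const.congr fun x => (hP0 x).symm),
    integral_zero_mul_eq_of_hasDerivAt_chain (P := fun k t => B k t / (k ! : ℝ))
      hB.hasDerivAt_div_factorial _ _ hP0]

end IsGenBernoulli

lemma Nat.factorial_mul_factorial_mul_choose_pred {N k : ℕ} (hk₀ : 1 ≤ k) (hk : k ≤ N + 1) :
    k ! * (N + 1 - k)! * N.choose (k - 1) = k * N ! := by
  obtain ⟨j, rfl⟩ := Nat.exists_eq_add_of_le' hk₀
  rw [Nat.add_sub_cancel, Nat.add_sub_add_right, Nat.factorial_succ,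
    ← Nat.choose_mul_factorial_mul_factorial (Nat.le_of_succ_le_succ hk)]
  ring

lemma neg_one_pow_sub_of_le {R : Type*} [Ring R] {r k : ℕ} (hk : k ≤ r) :
    (-1 : R) ^ (r - k) = -((-1) ^ (r + 1) * (-1) ^ k) := by
  obtain ⟨j, rfl⟩ := Nat.exists_eq_add_of_le hk
  rw [Nat.add_sub_cancel_left, ← pow_add, show k + j + 1 + k = j + 1 + 2 * k by ring, pow_add,
    pow_mul, neg_one_sq, one_pow, mul_one, pow_succ, mul_neg_one, neg_neg]

theorem stmt_16_general (m : ℕ) (B : ℕ → ℝ → ℝ) (hB : IsGenBernoulli m B)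
    (r n : ℕ) :
    ∫ t in (0 : ℝ)..1, B r t * B n t =
      ((-1 : ℝ) ^ (r + 1) * (r ! : ℝ) * (n ! : ℝ) * (m ! : ℝ) / ((r + n)! : ℝ)) *
        ((B (r + n + 1) 0 - B (r + n + 1) 1) / ((r + n + 1 : ℕ) : ℝ) +
          (1 / (m ! : ℝ)) *
            ∑ k ∈ Finset.Icc 1 r,
              ((-1 : ℝ) ^ k / (k : ℝ)) * ((r + n).choose (k - 1) : ℝ) *
                (B (r + n - k + 1) 0 * B k 0 - B (r + n - k + 1) 1 * B k 1)) := by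
  have hBP : ∫ t in (0 : ℝ)..1, B r t * B n t =
      r ! * n ! * ∫ t in (0 : ℝ)..1, B r t / r ! * (B n t / n !) := by
    rw [← intervalIntegral.integral_const_mul]
    congr 1 with t
    field_simp
  rw [hBP, hB.integral_div_factorial_mul_div_factorial, mul_add, mul_add]
  simp only [Finset.mul_sum]
  congr 1
  · rw [Nat.factorial_succ, pow_succ]
    push_cast
    field_simp
    ring
  · refine Finset.sum_congr rfl fun k hk => ?_
    obtain ⟨hk₀, hkr⟩ := Finset.mem_Icc.1 hk
    have hchoose := congrArg (Nat.cast : ℕ → ℝ)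
      (Nat.factorial_mul_factorial_mul_choose_pred (N := r + n) hk₀ (by omega))
    rw [show r + n + 1 - k = r + n - k + 1 by omega] at hchoose
    rw [neg_one_pow_sub_of_le hkr]
    push_cast at hchoose
    field_simp
    linear_combination (B k 1 * B (r + n - k + 1) 1 - B k 0 * B (r + n - k + 1) 0) * hchoose

theorem stmt_16 (m : ℕ) (hm : 0 < m) (B : ℕ → ℝ → ℝ) (hB : IsGenBernoulli m B)
    (r n : ℕ) (hr : 1 ≤ r) (hn : 1 ≤ n) :
    ∫ t in (0 : ℝ)..1, B r t * B n t =
      ((-1 : ℝ) ^ (r + 1) * (r ! : ℝ) * (n ! : ℝ) * (m ! : ℝ) / ((r + n)! : ℝ)) *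
        ((B (r + n + 1) 0 - B (r + n + 1) 1) / ((r + n + 1 : ℕ) : ℝ) +
          (1 / (m ! : ℝ)) *
            ∑ k ∈ Finset.Icc 1 r,
              ((-1 : ℝ) ^ k / (k : ℝ)) * ((r + n).choose (k - 1) : ℝ) *
                (B (r + n - k + 1) 0 * B k 0 - B (r + n - k + 1) 1 * B k 1)) :=
  stmt_16_general m B hB r n
end
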